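/- arXiv:1805.07954 — 2 statements merged into one kernel-verified Lean document; each statement's English description precedes it below -/
import Mathlib

section
/- (Message lower bound for AC, part (a)) In any AC protocol for the synchronous crash model γ^f, every nice run (all initial values 1, no failures) contains, for every process j, message chains from j to at least f other processes; consequently by the chain-counting lemma, at least n + f − 1 messages are sent in every nice run. -/
open scoped Classical

/-- A run: initial values, the finite set of messages actually sent (sender,
receiver, send-time; a message sent at time `t` belongs to round `t + 1` and
is received at time `t + 1`), and a crash schedule (`some c` means the process
crashes in round `c ≥ 1`: it behaves correctly in rounds `< c`, sends a subset
of the prescribed messages in round `c`, and nothing afterwards). -/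
structure Run (P : Type*) where
  val : P → Bool
  msgs : Finset (P × P × ℕ)
  crash : P → Option ℕ

/-- A process is faulty in a run iff it crashes. -/
def Faulty {P : Type*} (r : Run P) (i : P) : Prop := r.crash i ≠ none

/-- The messages received by `i` strictly before time `m` (sender, send-time). -/
def recvSet {P : Type*} [DecidableEq P] (r : Run P) (i : P) (m : ℕ) :
    Finset (P × ℕ) :=
  (r.msgs.filter (fun x => x.2.1 = i ∧ x.2.2 < m)).image (fun x => (x.1, x.2.2))

/-- The local state of process `i` at time `m`: its initial value, the current
time, and the messages it has received so far. -/
def view {P : Type*} [DecidableEq P] (r : Run P) (i : P) (m : ℕ) :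
    Bool × ℕ × Finset (P × ℕ) :=
  (r.val i, m, recvSet r i m)

/-- `r` follows the deterministic protocol `proto`, which prescribes, as a
function of a local state, the set of recipients of the messages the process
sends in the following round: every message sent is prescribed and is sent no
later than the sender's crashing round, and a process that has not crashed by
the end of round `t + 1` sends in round `t + 1` exactly the prescribed
messages. -/
def Follows {P : Type*} [DecidableEq P]
    (proto : P → Bool × ℕ × Finset (P × ℕ) → Finset P) (r : Run P) : Prop :=
  ∀ i jr t,
    ((i, jr, t) ∈ r.msgs → jr ∈ proto i (view r i t) ∧
        ∀ c, r.crash i = some c → t + 1 ≤ c) ∧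
    ((∀ c, r.crash i = some c → t + 1 < c) →
        ((i, jr, t) ∈ r.msgs ↔ jr ∈ proto i (view r i t)))

/-- The model `γ^f`: all runs of `proto` with at most `f` faulty processes. -/
def Gamma {P : Type*} [DecidableEq P] [Fintype P]
    (proto : P → Bool × ℕ × Finset (P × ℕ) → Finset P) (f : ℕ) : Set (Run P) :=
  {r | Follows proto r ∧ (Finset.univ.filter (fun p => Faulty r p)).card ≤ f}

/-- Message chains between (process, time) pairs: `(i, m) ⇝ (i', m')` iff
`i = i'` and `m ≤ m'`, or there is a sequence of messages with strictly
increasing send times, all in the window `[m, m')`, leading from `i` to `i'`. -/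
def ChainPt {P : Type*} (M : Finset (P × P × ℕ)) : P × ℕ → P × ℕ → Prop :=
  fun a b =>
    (a.1 = b.1 ∧ a.2 ≤ b.2) ∨
    ∃ (ℓ : ℕ) (j : Fin (ℓ + 1) → P) (t : Fin ℓ → ℕ),
      0 < ℓ ∧ j 0 = a.1 ∧ j (Fin.last ℓ) = b.1 ∧ StrictMono t ∧
      (∀ k : Fin ℓ, a.2 ≤ t k ∧ t k < b.2) ∧
      ∀ k : Fin ℓ, (j k.castSucc, j k.succ, t k) ∈ M

/-- Lower bound on message complexity of AC (Theorem, part (a)): in a nice run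
`r` (all initial values 1, no failures) of an AC protocol for `γ^f`, given the
chain-counting lemma and the Silent Choir Theorem (as hypotheses), and given
that every process eventually commits knowing that all initial values are 1,
at least `n + f - 1` messages are sent in `r`. -/
theorem AC_message_lower_bound {P : Type*} [DecidableEq P] [Fintype P]
    (hn : 2 < Fintype.card P) (f : ℕ) (hf : 1 ≤ f) (hfn : f < Fintype.card P)
    (proto : P → Bool × ℕ × Finset (P × ℕ) → Finset P)
    (r : Run P) (hr : r ∈ Gamma proto f)
    -- r is a nice run: all initial values 1, no failures
    (hnice : (∀ p, r.val p = true) ∧ ∀ p, r.crash p = none)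
    -- chain-counting lemma
    (hcount : ∀ k : ℕ, 0 < k →
      (∀ j : P, k ≤ (Finset.univ.filter
        (fun h => h ≠ j ∧ ∃ t : ℕ, ChainPt r.msgs (j, 0) (h, t))).card) →
      Fintype.card P + k - 1 ≤ r.msgs.card)
    -- Silent Choir Theorem
    (hchoir : ∀ i j : P, ∀ m : ℕ,
      (∀ r' ∈ Gamma proto f, view r' i m = view r i m → r'.val j = true) →
      (¬ ∃ t : ℕ, ChainPt r.msgs (j, 0) (i, t)) →
      0 < m ∧ f < ((Finset.univ.filter (fun p => Faulty r p)) ∪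
        (Finset.univ.filter (fun h => ChainPt r.msgs (j, 0) (h, m - 1)))).card)
    -- AC: every process commits at some time in the nice run r, and (by KoP and
    -- Commit Validity) when it does it knows that all initial values are 1
    (hcommit : ∀ i : P, ∃ m : ℕ,
      ∀ r' ∈ Gamma proto f, view r' i m = view r i m → ∀ j : P, r'.val j = true) :
    Fintype.card P + f - 1 ≤ r.msgs.card := by
  obtain ⟨hval, hcrash⟩ := hnice
  apply hcount f hf
  intro j
  by_cases hall : ∀ h : P, ∃ t, ChainPt r.msgs (j, 0) (h, t)
  · have hsub : Finset.univ \ {j} ⊆ Finset.univ.filter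
        (fun h => h ≠ j ∧ ∃ t : ℕ, ChainPt r.msgs (j, 0) (h, t)) := by
      intro h hh
      simp only [Finset.mem_sdiff, Finset.mem_singleton, Finset.mem_univ,
        true_and, Finset.mem_filter] at hh ⊢
      exact ⟨hh, hall h⟩
    have h1 : (Finset.univ \ ({j} : Finset P)).card = Fintype.card P - 1 := by
      rw [Finset.card_sdiff_of_subset (by simp)]
      simp
    have := Finset.card_le_card hsub
    omega
  · push_neg at hall
    obtain ⟨i, hi⟩ := hall
    obtain ⟨m, hm⟩ := hcommit i
    obtain ⟨hmpos, hcard⟩ := hchoir i j m (fun r' hr' hv => hm r' hr' hv j) (by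
      rintro ⟨t, ht⟩; exact (hi t) ht)
    have hfaulty : Finset.univ.filter (fun p => Faulty r p) = ∅ := by
      ext p; simp [Faulty, hcrash]
    rw [hfaulty, Finset.empty_union] at hcard
    set S := Finset.univ.filter (fun h => ChainPt r.msgs (j, 0) (h, m - 1)) with hS
    have hsub : S \ {j} ⊆ Finset.univ.filter
        (fun h => h ≠ j ∧ ∃ t : ℕ, ChainPt r.msgs (j, 0) (h, t)) := by
      intro h hh
      simp only [hS, Finset.mem_sdiff, Finset.mem_singleton, Finset.mem_univ,
        true_and, Finset.mem_filter] at hh ⊢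
      exact ⟨hh.2, m - 1, hh.1⟩
    have hle : S.card ≤ (S \ {j}).card + 1 := by
      have : S ⊆ (S \ {j}) ∪ {j} := by
        intro x hx
        by_cases hx' : x = j <;> simp [hx', hx]
      calc S.card ≤ ((S \ {j}) ∪ {j}).card := Finset.card_le_card this
        _ ≤ (S \ {j}).card + ({j} : Finset P).card := Finset.card_union_le _ _
        _ = (S \ {j}).card + 1 := by simp
    have := Finset.card_le_card hsub
    omega
end

section
/- (Commit requires knowing a chain to a correct process) Let P be an AC protocol for γ^f with f < n. Assume (i) Agreement and the Knowledge Property; (ii) every run has at least one correct (nonfaulty) process; (iii) Corollary: a committing process knows all initial values are 1; and (iv) the Silent Choir Theorem. Then whenever process i commits at time m in run r, for every process j the run r contains a message chain from j to some correct process. -/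
open scoped Classical

/-- Commit requires knowing a chain to a correct process: in an AC protocol
for `γ^f` with `f < n`, given Agreement, the fact that committing processes
know all initial values are 1, and the Silent Choir Theorem (as hypotheses),
whenever process `i` commits at time `m` in run `r`, for every process `j` the
run `r` contains a message chain from `j` to some correct process. -/
theorem commit_requires_chain_to_correct {P : Type*} [DecidableEq P] [Fintype P]
    (hn : 2 < Fintype.card P) (f : ℕ) (hf : 1 ≤ f) (hfn : f < Fintype.card P)
    (proto : P → Bool × ℕ × Finset (P × ℕ) → Finset P)
    (r : Run P) (hr : r ∈ Gamma proto f)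
    -- the (run-r) commit events of the protocol
    (commitsAt : P → ℕ → Prop)
    -- Agreement: if someone commits, every correct process commits
    (hagree : (∃ i m, commitsAt i m) →
      ∀ h : P, ¬ Faulty r h → ∃ m, commitsAt h m)
    -- a committing process knows all initial values are 1
    (hknow : ∀ h : P, ∀ m : ℕ, commitsAt h m →
      ∀ j : P, ∀ r' ∈ Gamma proto f, view r' h m = view r h m → r'.val j = true)
    -- the Silent Choir Theorem
    (hchoir : ∀ h j : P, ∀ m : ℕ,
      (∀ r' ∈ Gamma proto f, view r' h m = view r h m → r'.val j = true) →
      (¬ ∃ t : ℕ, ChainPt r.msgs (j, 0) (h, t)) →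
      0 < m ∧ f < ((Finset.univ.filter (fun p => Faulty r p)) ∪
        (Finset.univ.filter (fun p => ChainPt r.msgs (j, 0) (p, m - 1)))).card) :
    ∀ i : P, ∀ m : ℕ, commitsAt i m →
      ∀ j : P, ∃ (h : P) (t : ℕ), ¬ Faulty r h ∧ ChainPt r.msgs (j, 0) (h, t) := by
  intro i m hcommit j
  obtain ⟨hfollows, hcard⟩ := hr
  -- there is a correct process
  have hne : ∃ h : P, ¬ Faulty r h := by
    by_contra hc
    push_neg at hc
    have : (Finset.univ.filter (fun p => Faulty r p)) = Finset.univ := by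
      apply Finset.eq_univ_of_forall
      intro p; simp [hc p]
    rw [this, Finset.card_univ] at hcard
    omega
  obtain ⟨h, hcorrect⟩ := hne
  obtain ⟨mh, hmh⟩ := hagree ⟨i, m, hcommit⟩ h hcorrect
  by_cases hchain : ∃ t : ℕ, ChainPt r.msgs (j, 0) (h, t)
  · obtain ⟨t, ht⟩ := hchain
    exact ⟨h, t, hcorrect, ht⟩
  · have hk := hknow h mh hmh j
    obtain ⟨-, hbig⟩ := hchoir h j mh hk hchain
    have : (Finset.univ.filter (fun p => Faulty r p)).card <
        ((Finset.univ.filter (fun p => Faulty r p)) ∪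
          (Finset.univ.filter (fun p => ChainPt r.msgs (j, 0) (p, mh - 1)))).card := by
      omega
    have hsub : ¬ ((Finset.univ.filter (fun p => Faulty r p)) ∪
        (Finset.univ.filter (fun p => ChainPt r.msgs (j, 0) (p, mh - 1))) ⊆
        (Finset.univ.filter (fun p => Faulty r p))) :=
      fun hs => absurd (Finset.card_le_card hs) (by omega)
    obtain ⟨p, hpmem, hpnot⟩ := Finset.not_subset.mp hsub
    simp only [Finset.mem_union, Finset.mem_filter, Finset.mem_univ, true_and] at hpmem hpnot
    rcases hpmem with hpf | hps
    · exact absurd hpf hpnot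
    · exact ⟨p, mh - 1, hpnot, hps⟩
end
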